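/- arXiv:1101.2866 — 5 statements merged into one kernel-verified Lean document; each statement's English description precedes it below -/
import Mathlib

section
/- (Existence of J-normal forms) Let J be a strongly stable monomial ideal in S = K[x_0,...,x_n] and G a J-marked set. Then every polynomial h of S has a J-normal form modulo the ideal (G), i.e., there exists h_0 with h − h_0 ∈ (G) and Supp(h_0) ⊆ N(J). -/
open MvPolynomial

/-- Exponent vectors for monomials in `K[x_0, …, x_n]`. -/
abbrev E (n : ℕ) := Fin (n+1) →₀ ℕ

/-- Degree of a monomial (exponent vector). -/
def mdeg {n : ℕ} (m : E n) : ℕ := m.sum fun _ e => e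

/-- `M` is the set of monomials of a monomial ideal: closed under multiplication. -/
def UpClosed {n : ℕ} (M : Set (E n)) : Prop := ∀ m ∈ M, ∀ d : E n, m + d ∈ M

/-- Strongly stable: for `x^α ∈ J`, `i < j`, `x_i ∣ x^α` implies `x^α x_j / x_i ∈ J`. -/
def StronglyStable {n : ℕ} (M : Set (E n)) : Prop :=
  ∀ m ∈ M, ∀ i j : Fin (n+1), i < j → m i ≠ 0 →
    m - Finsupp.single i 1 + Finsupp.single j 1 ∈ M

/-- `B` is the minimal monomial basis of the monomial ideal with monomial set `M`. -/
def IsMinBasis {n : ℕ} (M : Set (E n)) (B : Finset (E n)) : Prop :=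
  ↑B ⊆ M ∧ (∀ m ∈ M, ∃ b ∈ B, b ≤ m) ∧ (∀ b ∈ B, ∀ b' ∈ B, b ≤ b' → b = b')

variable (K : Type*) [Field K]

/-- The monomial ideal `J` with monomial set `M`. -/
noncomputable def Jideal {n : ℕ} (M : Set (E n)) : Ideal (MvPolynomial (Fin (n+1)) K) :=
  Ideal.span ((fun m => monomial m (1:K)) '' M)

/-- The `K`-span `⟨N(J)⟩` of the monomials outside `M`. -/
noncomputable def NSpan {n : ℕ} (M : Set (E n)) : Submodule K (MvPolynomial (Fin (n+1)) K) :=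
  Submodule.span K ((fun m => monomial m (1:K)) '' Mᶜ)

/-- A `J`-marked set: for each `b` in the minimal basis `B`, a homogeneous polynomial
`F b = x^b - Σ c_γ x^γ` with head term `x^b` and all other monomials outside `M`. -/
def IsMarkedSet {n : ℕ} (M : Set (E n)) (B : Finset (E n))
    (F : E n → MvPolynomial (Fin (n+1)) K) : Prop :=
  ∀ b ∈ B, (F b).coeff b = 1 ∧
    F b ∈ homogeneousSubmodule (Fin (n+1)) K (mdeg b) ∧
    ∀ m ∈ (F b).support, m ≠ b → m ∉ M

/-- `S = I ⊕ ⟨N(J)⟩` as `K`-vector spaces, i.e. `N(J)` is a `K`-basis of `S/I`. -/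
def IsMarkedBasisIdeal {n : ℕ} (M : Set (E n))
    (I : Ideal (MvPolynomial (Fin (n+1)) K)) : Prop :=
  Submodule.restrictScalars K I ⊓ NSpan K M = ⊥ ∧
  Submodule.restrictScalars K I ⊔ NSpan K M = ⊤

/-- Hilbert function: `dim_K I_m`. -/
noncomputable def HF {n : ℕ} (I : Ideal (MvPolynomial (Fin (n+1)) K)) (m : ℕ) : ℕ :=
  Module.finrank K ↥(Submodule.restrictScalars K I ⊓ homogeneousSubmodule (Fin (n+1)) K m)

namespace NFaux

variable {n : ℕ}

/-- Sum of entries with index `≥ j`. -/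
def topSum (m : E n) (j : ℕ) : ℕ := ∑ i : Fin (n+1), if j ≤ (i:ℕ) then m i else 0

lemma topSum_add (a b : E n) (j : ℕ) : topSum (a+b) j = topSum a j + topSum b j := by
  simp only [topSum, Finsupp.add_apply]
  rw [← Finset.sum_add_distrib]
  apply Finset.sum_congr rfl
  intro i _
  split_ifs <;> simp

lemma topSum_single (i : Fin (n+1)) (c : ℕ) (j : ℕ) :
    topSum (Finsupp.single i c) j = if j ≤ (i:ℕ) then c else 0 := by
  simp only [topSum]
  rw [Finset.sum_eq_single i]
  · simp
  · intro b _ hb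
    rw [Finsupp.single_apply_eq_zero.2 (fun h => absurd h.symm (by exact fun h' => hb h'.symm))]
    simp
  · simp

lemma topSum_eq_zero (m : E n) {j : ℕ} (hj : n + 1 ≤ j) : topSum m j = 0 := by
  apply Finset.sum_eq_zero
  intro i _
  have : ¬ (j ≤ (i:ℕ)) := by omega
  simp [this]

lemma topSum_anti (m : E n) {j j' : ℕ} (h : j ≤ j') : topSum m j' ≤ topSum m j := by
  apply Finset.sum_le_sum
  intro i _
  split_ifs with h1 h2 <;> omega

lemma topSum_succ (m : E n) (i : Fin (n+1)) :
    topSum m i = m i + topSum m ((i:ℕ)+1) := by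
  simp only [topSum]
  have key : ∀ b : Fin (n+1), (if (i:ℕ) ≤ (b:ℕ) then m b else 0)
      = (if b = i then m b else 0) + (if (i:ℕ)+1 ≤ (b:ℕ) then m b else 0) := by
    intro b
    rcases eq_or_ne b i with rfl | hbi
    · simp
    · have hv : (b:ℕ) ≠ (i:ℕ) := fun h => hbi (Fin.ext h)
      have : ¬ b = i := hbi
      split_ifs <;> omega
  rw [Finset.sum_congr rfl (fun b _ => key b), Finset.sum_add_distrib,
    Finset.sum_ite_eq' Finset.univ i]
  simp

lemma eq_of_topSum_eq {u v : E n} (h : ∀ j, topSum u j = topSum v j) : u = v := by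
  ext i
  have h1 := topSum_succ u i
  have h2 := topSum_succ v i
  have h3 := h (i:ℕ)
  have h4 := h ((i:ℕ)+1)
  omega

lemma dominance {M : Set (E n)} (hup : UpClosed M) (hss : StronglyStable M) :
    ∀ D : ℕ, ∀ u v : E n, u ∈ M → (∀ j, topSum u j ≤ topSum v j) →
    (∑ j ∈ Finset.range (n+2), (topSum v j - topSum u j)) ≤ D → v ∈ M := by
  intro D
  induction D with
  | zero =>
    intro u v hu hle hsum
    have heq : ∀ j, topSum u j = topSum v j := by
      intro j
      rcases le_or_gt (n+1) j with hj | hj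
      · rw [topSum_eq_zero u hj, topSum_eq_zero v hj]
      · have hj2 : j ∈ Finset.range (n+2) := Finset.mem_range.2 (by omega)
        have := Finset.sum_eq_zero_iff.1 (Nat.le_zero.1 hsum) j hj2
        have := hle j
        omega
    rw [← eq_of_topSum_eq heq]; exact hu
  | succ D IH =>
    intro u v hu hle hsum
    by_cases hall : ∀ j, topSum u j = topSum v j
    · rw [← eq_of_topSum_eq hall]; exact hu
    · push_neg at hall
      obtain ⟨j0, hj0⟩ := hall
      have hj0' : topSum u j0 < topSum v j0 := lt_of_le_of_ne (hle j0) hj0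
      have hj0n : j0 ≤ n := by
        by_contra hc
        rw [topSum_eq_zero u (by omega), topSum_eq_zero v (by omega)] at hj0'
        omega
      by_cases h0 : topSum u 0 < topSum v 0
      · -- add a variable x_0
        set u' := u + Finsupp.single (0 : Fin (n+1)) 1 with hu'def
        have hu' : u' ∈ M := hup u hu _
        have htu' : ∀ j, topSum u' j = topSum u j + (if j ≤ 0 then 1 else 0) := by
          intro j; rw [topSum_add, topSum_single]; simp
        have hle' : ∀ j, topSum u' j ≤ topSum v j := by
          intro j; rw [htu' j]
          rcases Nat.eq_zero_or_pos j with rfl | hj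
          · simpa using h0
          · have : ¬ (j ≤ 0) := by omega
            simp [this, hle j]
        have hsum' : (∑ j ∈ Finset.range (n+2), (topSum v j - topSum u' j)) ≤ D := by
          have hlt : (∑ j ∈ Finset.range (n+2), (topSum v j - topSum u' j))
              < (∑ j ∈ Finset.range (n+2), (topSum v j - topSum u j)) := by
            apply Finset.sum_lt_sum
            · intro j _
              have := htu' j; have := hle j; omega
            · refine ⟨0, Finset.mem_range.2 (by omega), ?_⟩
              have h := htu' 0
              simp only [le_refl, if_pos] at h
              omega
          omega
        exact IH u' v hu' hle' hsum'
      · have h0eq : topSum u 0 = topSum v 0 := le_antisymm (hle 0) (by omega)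
        -- pick k maximal with strict inequality
        set K0 := (Finset.range (n+2)).filter (fun j => topSum u j < topSum v j) with hK0
        have hK0ne : K0.Nonempty := ⟨j0, by simp [hK0, Finset.mem_filter, hj0', Finset.mem_range]; omega⟩
        set k := K0.max' hK0ne with hkdef
        have hkmem : k ∈ K0 := K0.max'_mem hK0ne
        have hklt : topSum u k < topSum v k := (Finset.mem_filter.1 hkmem).2
        have hkr : k < n + 2 := Finset.mem_range.1 (Finset.mem_filter.1 hkmem).1
        have hkn : k ≤ n := by
          by_contra hc
          rw [topSum_eq_zero u (by omega), topSum_eq_zero v (by omega)] at hklt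
          omega
        have hk1 : 1 ≤ k := by
          rcases Nat.eq_zero_or_pos k with hk0 | h; · rw [hk0] at hklt; omega
          · exact h
        have hgt : ∀ j, k < j → topSum u j = topSum v j := by
          intro j hj
          rcases le_or_gt (n+1) j with hjn | hjn
          · rw [topSum_eq_zero u hjn, topSum_eq_zero v hjn]
          · by_contra hne
            have hlt : topSum u j < topSum v j := lt_of_le_of_ne (hle j) hne
            have : j ∈ K0 := by
              rw [hK0, Finset.mem_filter, Finset.mem_range]; exact ⟨by omega, hlt⟩
            have := Finset.le_max' K0 j this
            omega
        -- pick i maximal below k with equality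
        set I0 := (Finset.range k).filter (fun j => topSum u j = topSum v j) with hI0
        have hI0ne : I0.Nonempty := ⟨0, by simp [hI0, Finset.mem_filter, Finset.mem_range, h0eq]; omega⟩
        set i := I0.max' hI0ne with hidef
        have himem : i ∈ I0 := I0.max'_mem hI0ne
        have hieq : topSum u i = topSum v i := (Finset.mem_filter.1 himem).2
        have hik : i < k := Finset.mem_range.1 (Finset.mem_filter.1 himem).1
        have hmid : ∀ j, i < j → j ≤ k → topSum u j < topSum v j := by
          intro j hij hjk
          rcases eq_or_lt_of_le hjk with rfl | hjk'
          · exact hklt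
          · by_contra hne
            have heq : topSum u j = topSum v j := le_antisymm (hle j) (by omega)
            have : j ∈ I0 := by rw [hI0, Finset.mem_filter, Finset.mem_range]; exact ⟨hjk', heq⟩
            have := Finset.le_max' I0 j this
            omega
        have hin : i < n + 1 := by omega
        have hkn1 : k < n + 1 := by omega
        set iF : Fin (n+1) := ⟨i, hin⟩ with hiF
        set kF : Fin (n+1) := ⟨k, hkn1⟩ with hkF
        have hiv : (iF : ℕ) = i := rfl
        have hkv : (kF : ℕ) = k := rfl
        have hsucci := topSum_succ u iF
        have hsucci' := topSum_succ v iF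
        rw [hiv] at hsucci hsucci'
        have hii : topSum u (i+1) < topSum v (i+1) := hmid (i+1) (by omega) (by omega)
        have huv : v iF < u iF := by omega
        have huipos : u iF ≠ 0 := by omega
        have hiFkF : iF < kF := by
          rw [Fin.lt_def]; exact hik
        set u' := u - Finsupp.single iF 1 + Finsupp.single kF 1 with hu'def
        have hu' : u' ∈ M := hss u hu iF kF hiFkF huipos
        have hsle : Finsupp.single iF 1 ≤ u := by
          rw [Finsupp.single_le_iff]; omega
        have hw : u = (u - Finsupp.single iF 1) + Finsupp.single iF 1 :=
          (tsub_add_cancel_of_le hsle).symm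
        have htu : ∀ j, topSum u j
            = topSum (u - Finsupp.single iF 1) j + (if j ≤ i then 1 else 0) := by
          intro j
          conv_lhs => rw [hw]
          rw [topSum_add, topSum_single, hiv]
        have htu' : ∀ j, topSum u' j
            = topSum (u - Finsupp.single iF 1) j + (if j ≤ k then 1 else 0) := by
          intro j
          rw [hu'def, topSum_add, topSum_single, hkv]
        have hboth : ∀ j, (topSum u' j = topSum u j + 1 ∧ i < j ∧ j ≤ k)
            ∨ (topSum u' j = topSum u j ∧ (j ≤ i ∨ k < j)) := by
          intro j
          have h1 := htu j
          have h2 := htu' j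
          rcases le_or_gt j i with hji | hji
          · right
            rw [if_pos hji] at h1
            rw [if_pos (by omega : j ≤ k)] at h2
            exact ⟨by omega, Or.inl hji⟩
          · rcases le_or_gt j k with hjk | hjk
            · left
              rw [if_neg (by omega)] at h1
              rw [if_pos hjk] at h2
              exact ⟨by omega, hji, hjk⟩
            · right
              rw [if_neg (by omega)] at h1
              rw [if_neg (by omega)] at h2
              exact ⟨by omega, Or.inr hjk⟩
        have hle' : ∀ j, topSum u' j ≤ topSum v j := by
          intro j
          rcases hboth j with ⟨hj, hj1, hj2⟩ | ⟨hj, _⟩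
          · have := hmid j hj1 hj2; omega
          · have := hle j; omega
        have hsum' : (∑ j ∈ Finset.range (n+2), (topSum v j - topSum u' j)) ≤ D := by
          have hlt : (∑ j ∈ Finset.range (n+2), (topSum v j - topSum u' j))
              < (∑ j ∈ Finset.range (n+2), (topSum v j - topSum u j)) := by
            apply Finset.sum_lt_sum
            · intro j _
              rcases hboth j with ⟨hj, _, _⟩ | ⟨hj, _⟩ <;> omega
            · refine ⟨k, Finset.mem_range.2 (by omega), ?_⟩
              rcases hboth k with ⟨hj, _, _⟩ | ⟨hj, hj2⟩
              · omega
              · omega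
          omega
        exact IH u' v hu' hle' hsum'

/-- Key lemma: if `γ ∉ M`, `b' ∈ M`, `b' + e' = γ + e` with the support condition,
then `e'` is smaller than `e` in reverse-lex. -/
lemma keylem {M : Set (E n)} (hup : UpClosed M) (hss : StronglyStable M)
    {γ e b' e' : E n} (hγ : γ ∉ M) (hb' : b' ∈ M)
    (heq : b' + e' = γ + e)
    (hcond : ∀ i j : Fin (n+1), e' i ≠ 0 → b' j ≠ 0 → i ≤ j) :
    ∃ k : Fin (n+1), e' k < e k ∧ ∀ j, k < j → e' j = e j := by
  have heqp : ∀ i, b' i + e' i = γ i + e i := by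
    intro i
    have := congrArg (fun f => f i) heq
    simpa using this
  -- the set of indices where e' and e differ
  have hne : e' ≠ e := by
    rintro rfl
    have : b' = γ := by
      ext i; have := heqp i; omega
    exact hγ (this ▸ hb')
  set Dset := Finset.univ.filter (fun j : Fin (n+1) => e' j ≠ e j) with hDset
  have hDne : Dset.Nonempty := by
    by_contra hc
    rw [Finset.not_nonempty_iff_eq_empty] at hc
    apply hne
    ext i
    by_contra hci
    have : i ∈ Dset := by rw [hDset]; simp [hci]
    rw [hc] at this; simp at this
  set k := Dset.max' hDne with hk
  have hkmem : k ∈ Dset := Dset.max'_mem hDne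
  have hkne : e' k ≠ e k := (Finset.mem_filter.1 hkmem).2
  have hgt : ∀ j, k < j → e' j = e j := by
    intro j hj
    by_contra hc
    have : j ∈ Dset := by rw [hDset]; simp [hc]
    have := Dset.le_max' j this
    exact absurd hj (by rw [← hk] at this; exact not_lt.2 this)
  rcases lt_or_gt_of_ne hkne with h | h
  · exact ⟨k, h, hgt⟩
  · -- derive γ ∈ M, contradiction
    exfalso
    have hbg : ∀ j, k < j → b' j = γ j := by
      intro j hj
      have := heqp j
      have := hgt j hj
      omega
    have hgk : b' k < γ k := by
      have := heqp k
      omega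
    have hek' : e' k ≠ 0 := by omega
    have hb0 : ∀ j, j < k → b' j = 0 := by
      intro j hj
      by_contra hc
      exact absurd (hcond k j hek' hc) (not_le.2 hj)
    -- dominance hypothesis
    have hdom : ∀ j : ℕ, topSum b' j ≤ topSum γ j := by
      intro j
      rcases le_or_gt j (k:ℕ) with hj | hj
      · have h1 : topSum b' j = topSum b' (k:ℕ) := by
          apply Finset.sum_congr rfl
          intro b _
          rcases lt_or_ge b k with hbk | hbk
          · rw [hb0 b hbk]; simp
          · have hkb : (k:ℕ) ≤ (b:ℕ) := hbk
            rw [if_pos (by omega), if_pos hkb]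
        have h2 : topSum γ (k:ℕ) ≤ topSum γ j := topSum_anti γ hj
        have h3 : topSum b' (k:ℕ) < topSum γ (k:ℕ) := by
          have hb := topSum_succ b' k
          have hg := topSum_succ γ k
          have h4 : topSum b' ((k:ℕ)+1) = topSum γ ((k:ℕ)+1) := by
            apply Finset.sum_congr rfl
            intro b _
            split_ifs with hbb
            · exact hbg b (by rw [Fin.lt_def]; omega)
            · rfl
          omega
        omega
      · apply le_of_eq
        apply Finset.sum_congr rfl
        intro b _
        split_ifs with hbb
        · exact hbg b (by rw [Fin.lt_def]; omega)
        · rfl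
    exact hγ (dominance hup hss _ b' γ hb' hdom le_rfl)

lemma single_le_of_pos {m : E n} {i : Fin (n+1)} (h : m i ≠ 0) : Finsupp.single i 1 ≤ m := by
  rw [Finsupp.single_le_iff]; omega

lemma mdeg_eq_sum (m : E n) : mdeg m = ∑ i : Fin (n+1), m i := by
  rw [mdeg, Finsupp.sum_fintype]
  intro _; rfl

lemma mdeg_add (a b : E n) : mdeg (a + b) = mdeg a + mdeg b := by
  simp [mdeg_eq_sum, Finsupp.add_apply, Finset.sum_add_distrib]

lemma mdeg_single (i : Fin (n+1)) (c : ℕ) : mdeg (Finsupp.single i c) = c := by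
  rw [mdeg, Finsupp.sum_single_index]; rfl

lemma apply_le_mdeg (m : E n) (i : Fin (n+1)) : m i ≤ mdeg m := by
  rw [mdeg_eq_sum]
  exact Finset.single_le_sum (f := fun j => m j) (fun _ _ => Nat.zero_le _) (Finset.mem_univ i)

/-- Existence of the Eliahou–Kervaire-style decomposition. -/
lemma EKexists {M : Set (E n)} (hup : UpClosed M) (hss : StronglyStable M)
    {B : Finset (E n)} (hB : IsMinBasis M B) :
    ∀ d : ℕ, ∀ m ∈ M, mdeg m = d →
      ∃ b e : E n, b ∈ B ∧ m = b + e ∧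
        ∀ i j : Fin (n+1), e i ≠ 0 → b j ≠ 0 → i ≤ j := by
  intro d
  induction d using Nat.strong_induction_on with
  | _ d IH =>
    intro m hm hdeg
    by_cases hmB : m ∈ B
    · exact ⟨m, 0, hmB, by simp, by simp⟩
    · obtain ⟨b₀, hb₀B, hb₀le⟩ := hB.2.1 m hm
      have hb₀ne : b₀ ≠ m := fun h => hmB (h ▸ hb₀B)
      have hmne : m ≠ 0 := by
        rintro rfl
        exact hb₀ne (le_antisymm hb₀le (zero_le : (0 : E n) ≤ b₀))
      have hsupp : m.support.Nonempty := Finsupp.support_nonempty_iff.2 hmne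
      set i := m.support.min' hsupp with hi
      have himem : i ∈ m.support := m.support.min'_mem hsupp
      have hipos : m i ≠ 0 := Finsupp.mem_support_iff.1 himem
      have himin : ∀ j ∈ m.support, i ≤ j := fun j hj => m.support.min'_le j hj
      have hsle : Finsupp.single i 1 ≤ m := single_le_of_pos hipos
      set m' := m - Finsupp.single i 1 with hm'
      have hm'add : m' + Finsupp.single i 1 = m := tsub_add_cancel_of_le hsle
      have hm'app : ∀ l, m' l = m l - (Finsupp.single i 1) l := by
        intro l; rw [hm', Finsupp.tsub_apply]
      have hble : ∀ l, b₀ l ≤ m l := Finsupp.le_def.1 hb₀le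
      -- m' ∈ M
      have hm'M : m' ∈ M := by
        by_cases hb : b₀ ≤ m'
        · have : m' = b₀ + (m' - b₀) := (add_tsub_cancel_of_le hb).symm
          rw [this]
          exact hup b₀ (hB.1 hb₀B) _
        · have hb₀i : b₀ i = m i := by
            by_contra hc
            apply hb
            rw [Finsupp.le_def]
            intro l
            rw [hm'app l, Finsupp.single_apply]
            rcases eq_or_ne i l with rfl | hli
            · rw [if_pos rfl]; have := hble i; omega
            · rw [if_neg hli]; have := hble l; omega
          have hexj : ∃ j, b₀ j < m j := by
            by_contra hc
            push_neg at hc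
            exact hb₀ne (Finsupp.ext fun l => le_antisymm (hble l) (hc l))
          obtain ⟨j, hj⟩ := hexj
          have hjm : j ∈ m.support := Finsupp.mem_support_iff.2 (by omega)
          have hij : i < j := by
            rcases lt_or_eq_of_le (himin j hjm) with h | h
            · exact h
            · exfalso; rw [← h] at hj; omega
          have hijv : (i:ℕ) < (j:ℕ) := hij
          have hb₀ipos : b₀ i ≠ 0 := by omega
          set b₁ := b₀ - Finsupp.single i 1 + Finsupp.single j 1 with hb₁
          have hb₁M : b₁ ∈ M := hss b₀ (hB.1 hb₀B) i j hij hb₀ipos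
          have hb₁le : b₁ ≤ m' := by
            rw [Finsupp.le_def]
            intro l
            rw [hb₁, Finsupp.add_apply, Finsupp.tsub_apply, hm'app l,
              Finsupp.single_apply, Finsupp.single_apply]
            by_cases h1 : i = l
            · by_cases h2 : j = l
              · exact absurd (h1.trans h2.symm) (ne_of_lt hij)
              · rw [if_pos h1, if_neg h2]
                have hb := hb₀i
                have hm := hipos
                rw [h1] at hb hm
                omega
            · by_cases h2 : j = l
              · rw [if_neg h1, if_pos h2]
                have hj' := hj
                rw [h2] at hj'
                have := hble l
                omega
              · rw [if_neg h1, if_neg h2]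
                have := hble l
                omega
          have : m' = b₁ + (m' - b₁) := (add_tsub_cancel_of_le hb₁le).symm
          rw [this]
          exact hup b₁ hb₁M _
      have hd1 : mdeg m' + 1 = d := by
        rw [← hdeg, ← hm'add, mdeg_add, mdeg_single]
      have hdpos : 1 ≤ d := by omega
      obtain ⟨b, e, hbB, hdec, hcond⟩ := IH (d-1) (by omega) m' hm'M (by omega)
      refine ⟨b, e + Finsupp.single i 1, hbB, ?_, ?_⟩
      · rw [← hm'add, hdec, add_assoc]
      · intro l j' hl hbj'
        rw [Finsupp.add_apply] at hl
        by_cases hel : e l ≠ 0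
        · exact hcond l j' hel hbj'
        · push_neg at hel
          have hl' : Finsupp.single i 1 l ≠ 0 := by omega
          have hli : i = l := by
            by_contra hc
            rw [Finsupp.single_apply, if_neg hc] at hl'
            exact hl' rfl
          subst hli
          have hm'j' : m' j' ≠ 0 := by
            have := congrArg (fun f => f j') hdec
            simp only [Finsupp.add_apply] at this
            omega
          have hmj' : j' ∈ m.support := by
            rw [Finsupp.mem_support_iff]
            have := hm'app j'
            omega
          exact himin j' hmj'

/-- Base-(d+1) valuation of an exponent vector; a substitute for reverse-lex. -/
def nu (d : ℕ) (e : E n) : ℕ := ∑ i : Fin (n+1), e i * (d+1)^(i:ℕ)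

lemma geom_bound (d : ℕ) : ∀ t : ℕ, (∑ i ∈ Finset.range t, d * (d+1)^i) + 1 = (d+1)^t := by
  intro t
  induction t with
  | zero => simp
  | succ t IH =>
    rw [Finset.sum_range_succ, pow_succ]
    have h1 : (d+1)^t * (d+1) = (d+1)^t * d + (d+1)^t := by ring
    have h2 : d * (d+1)^t = (d+1)^t * d := Nat.mul_comm _ _
    omega

lemma nu_lt {d : ℕ} {e e' : E n} (_he : ∀ i, e i ≤ d) (he' : ∀ i, e' i ≤ d)
    (k : Fin (n+1)) (h1 : e' k < e k) (h2 : ∀ j, k < j → e' j = e j) :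
    nu d e' < nu d e := by
  have hsplit : ∀ f : E n, nu d f
      = (∑ i ∈ Finset.univ.filter (fun i : Fin (n+1) => i < k), f i * (d+1)^(i:ℕ))
        + f k * (d+1)^(k:ℕ)
        + (∑ i ∈ Finset.univ.filter (fun i : Fin (n+1) => k < i), f i * (d+1)^(i:ℕ)) := by
    intro f
    rw [nu]
    rw [← Finset.sum_filter_add_sum_filter_not Finset.univ (fun i : Fin (n+1) => k < i)]
    have hnot : Finset.univ.filter (fun i : Fin (n+1) => ¬ k < i)
        = insert k (Finset.univ.filter (fun i : Fin (n+1) => i < k)) := by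
      ext b
      simp only [Finset.mem_filter, Finset.mem_univ, true_and, Finset.mem_insert, not_lt]
      constructor
      · intro hb
        rcases lt_or_eq_of_le hb with h | h
        · exact Or.inr h
        · exact Or.inl h
      · rintro (rfl | hb)
        · exact le_rfl
        · exact le_of_lt hb
    rw [hnot, Finset.sum_insert (by simp)]
    ring
  rw [hsplit e', hsplit e]
  have htop : (∑ i ∈ Finset.univ.filter (fun i : Fin (n+1) => k < i), e' i * (d+1)^(i:ℕ))
      = (∑ i ∈ Finset.univ.filter (fun i : Fin (n+1) => k < i), e i * (d+1)^(i:ℕ)) := by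
    apply Finset.sum_congr rfl
    intro b hb
    rw [h2 b (Finset.mem_filter.1 hb).2]
  rw [htop]
  have hlow : (∑ i ∈ Finset.univ.filter (fun i : Fin (n+1) => i < k), e' i * (d+1)^(i:ℕ))
      < (d+1)^(k:ℕ) := by
    have hle : (∑ i ∈ Finset.univ.filter (fun i : Fin (n+1) => i < k), e' i * (d+1)^(i:ℕ))
        ≤ (∑ i ∈ Finset.range (k:ℕ), d * (d+1)^i) := by
      have := Finset.sum_le_sum (s := Finset.univ.filter (fun i : Fin (n+1) => i < k))
        (f := fun i : Fin (n+1) => e' i * (d+1)^(i:ℕ))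
        (g := fun i : Fin (n+1) => d * (d+1)^(i:ℕ))
        (fun i _ => Nat.mul_le_mul_right _ (he' i))
      refine le_trans this (le_of_eq ?_)
      refine Finset.sum_nbij' (i := fun a : Fin (n+1) => (a : ℕ))
        (j := fun a : ℕ => if ha : a < n+1 then (⟨a, ha⟩ : Fin (n+1)) else 0)
        ?_ ?_ ?_ ?_ ?_
      · intro a ha
        rw [Finset.mem_range]
        exact (Finset.mem_filter.1 ha).2
      · intro a ha
        rw [Finset.mem_range] at ha
        have han : a < n + 1 := by omega
        simp only [dif_pos han]
        simp only [Finset.mem_filter, Finset.mem_univ, true_and]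
        rw [Fin.lt_def]
        exact ha
      · intro a ha
        have : (a : ℕ) < n + 1 := a.isLt
        simp only [dif_pos this]
      · intro a ha
        rw [Finset.mem_range] at ha
        have han : a < n + 1 := by omega
        simp only [dif_pos han]
      · intro a _
        rfl
    have := geom_bound d (k:ℕ)
    omega
  have hmono : e' k * (d+1)^(k:ℕ) + (d+1)^(k:ℕ) ≤ e k * (d+1)^(k:ℕ) := by
    have : (e' k + 1) * (d+1)^(k:ℕ) ≤ e k * (d+1)^(k:ℕ) :=
      Nat.mul_le_mul_right _ (by omega)
    nlinarith [this]
  omega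

lemma mdeg_eq_degree (m : E n) : mdeg m = Finsupp.degree m := rfl

lemma isHom_mdeg {K : Type*} [Field K] {b : E n} {f : MvPolynomial (Fin (n+1)) K}
    (hf : f ∈ homogeneousSubmodule (Fin (n+1)) K (mdeg b)) {γ : E n}
    (hγ : MvPolynomial.coeff γ f ≠ 0) : mdeg γ = mdeg b := by
  rw [mem_homogeneousSubmodule] at hf
  have h := hf hγ
  rw [mdeg_eq_degree, Finsupp.degree_eq_weight_one]
  exact h

lemma reduce {K : Type*} [Field K] {M : Set (E n)} (hup : UpClosed M) (hss : StronglyStable M)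
    {B : Finset (E n)} (hB : IsMinBasis M B)
    {F : E n → MvPolynomial (Fin (n+1)) K} (hF : IsMarkedSet K M B F) (d : ℕ) :
    ∀ N : ℕ, ∀ b e : E n, b ∈ B → (∀ i j : Fin (n+1), e i ≠ 0 → b j ≠ 0 → i ≤ j) →
    mdeg b + mdeg e = d → nu d e < N →
    ∃ h₀ : MvPolynomial (Fin (n+1)) K,
      monomial (b + e) (1:K) - h₀ ∈ Ideal.span (F '' ↑B) ∧ ∀ m ∈ h₀.support, m ∉ M := by
  intro N
  induction N with
  | zero => intro b e _ _ _ h; exact absurd h (Nat.not_lt_zero _)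
  | succ N IH =>
    intro b e hbB hcond hdeg hnu
    obtain ⟨hcoeff, hhom, hsupp⟩ := hF b hbB
    set f := F b with hfdef
    set t := f - monomial b (1:K) with ht
    have hfI : f ∈ Ideal.span (F '' ↑B) := Ideal.subset_span ⟨b, by simpa using hbB, rfl⟩
    have htcoeff : ∀ γ, MvPolynomial.coeff γ t
        = MvPolynomial.coeff γ f - (if b = γ then 1 else 0) := by
      intro γ; rw [ht, MvPolynomial.coeff_sub, coeff_monomial]
    have hts : ∀ γ ∈ t.support, γ ≠ b ∧ γ ∉ M ∧ mdeg γ = mdeg b := by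
      intro γ hγ
      have hc : MvPolynomial.coeff γ t ≠ 0 := MvPolynomial.mem_support_iff.1 hγ
      have hγb : γ ≠ b := by
        rintro rfl
        rw [htcoeff, if_pos rfl, hcoeff] at hc
        simp at hc
      have hcf : MvPolynomial.coeff γ f ≠ 0 := by
        rw [htcoeff, if_neg (fun h => hγb h.symm)] at hc
        simpa using hc
      exact ⟨hγb, hsupp γ (MvPolynomial.mem_support_iff.2 hcf) hγb, isHom_mdeg hhom hcf⟩
    have hmon : monomial (b+e) (1:K) = monomial e 1 * f - monomial e 1 * t := by
      have h1 : monomial e (1:K) * monomial b 1 = monomial (b+e) 1 := by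
        rw [monomial_mul, one_mul]
        exact congrArg (fun s => monomial s (1:K)) (add_comm e b)
      rw [ht]
      rw [← h1]
      ring
    have hee : ∀ i, e i ≤ d := by
      intro i; have := apply_le_mdeg e i; omega
    have hper : ∀ γ : E n, ∃ g : MvPolynomial (Fin (n+1)) K,
        γ ∈ t.support → (monomial (γ + e) (1:K) - g ∈ Ideal.span (F '' ↑B)
          ∧ ∀ m ∈ g.support, m ∉ M) := by
      intro γ
      by_cases hγt : γ ∈ t.support
      · obtain ⟨hγb, hγM, hγdeg⟩ := hts γ hγt
        by_cases hge : γ + e ∈ M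
        · obtain ⟨b₁, e₁, hb₁B, hdec, hcond₁⟩ :=
            EKexists hup hss hB (mdeg (γ+e)) (γ+e) hge rfl
          have hd : mdeg (γ + e) = d := by rw [mdeg_add, hγdeg]; exact hdeg
          obtain ⟨k, hk1, hk2⟩ := keylem hup hss hγM (hB.1 hb₁B) hdec.symm hcond₁
          have hb1e1 : mdeg b₁ + mdeg e₁ = d := by rw [← mdeg_add, ← hdec, hd]
          have he1 : ∀ i, e₁ i ≤ d := by
            intro i; have := apply_le_mdeg e₁ i; omega
          have hnu1 : nu d e₁ < N :=
            lt_of_lt_of_le (nu_lt hee he1 k hk1 hk2) (Nat.lt_succ_iff.1 hnu)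
          obtain ⟨g, hg1, hg2⟩ := IH b₁ e₁ hb₁B hcond₁ hb1e1 hnu1
          exact ⟨g, fun _ => ⟨by rw [hdec]; exact hg1, hg2⟩⟩
        · refine ⟨monomial (γ+e) 1, fun _ => ⟨by simp, ?_⟩⟩
          intro m hm
          have hc := MvPolynomial.mem_support_iff.1 hm
          rw [coeff_monomial] at hc
          by_cases hmm : γ + e = m
          · subst hmm; exact hge
          · rw [if_neg hmm] at hc; exact absurd rfl hc
      · exact ⟨0, fun h => absurd h hγt⟩
    choose g hg using hper
    refine ⟨- ∑ γ ∈ t.support, C (MvPolynomial.coeff γ t) * g γ, ?_, ?_⟩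
    · have hmt : monomial e (1:K) * t
          = ∑ γ ∈ t.support, C (MvPolynomial.coeff γ t) * monomial (γ+e) 1 := by
        conv_lhs => rw [← support_sum_monomial_coeff t]
        rw [Finset.mul_sum]
        apply Finset.sum_congr rfl
        intro γ _
        rw [monomial_mul, C_mul_monomial, one_mul, mul_one, add_comm e γ]
      have hsplit : ∑ γ ∈ t.support, C (MvPolynomial.coeff γ t) * (monomial (γ+e) (1:K) - g γ)
          = (∑ γ ∈ t.support, C (MvPolynomial.coeff γ t) * monomial (γ+e) 1)
            - ∑ γ ∈ t.support, C (MvPolynomial.coeff γ t) * g γ := by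
        rw [← Finset.sum_sub_distrib]
        apply Finset.sum_congr rfl
        intro γ _
        rw [mul_sub]
      have hexp : monomial (b+e) (1:K) - (- ∑ γ ∈ t.support, C (MvPolynomial.coeff γ t) * g γ)
          = monomial e 1 * f
            - ∑ γ ∈ t.support, C (MvPolynomial.coeff γ t) * (monomial (γ+e) 1 - g γ) := by
        rw [hsplit, ← hmt, hmon]
        ring
      rw [hexp]
      apply Ideal.sub_mem
      · exact Ideal.mul_mem_left _ _ hfI
      · exact Ideal.sum_mem _ (fun γ hγ => Ideal.mul_mem_left _ _ ((hg γ hγ).1))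
    · intro m hm
      intro hmM
      apply MvPolynomial.mem_support_iff.1 hm
      rw [MvPolynomial.coeff_neg, coeff_sum, neg_eq_zero]
      apply Finset.sum_eq_zero
      intro γ hγ
      rw [coeff_C_mul]
      have hms : MvPolynomial.coeff m (g γ) = 0 := by
        by_contra hc
        exact (hg γ hγ).2 m (MvPolynomial.mem_support_iff.2 hc) hmM
      rw [hms, mul_zero]

lemma normform_mon {K : Type*} [Field K] {M : Set (E n)} (hup : UpClosed M) (hss : StronglyStable M)
    {B : Finset (E n)} (hB : IsMinBasis M B)
    {F : E n → MvPolynomial (Fin (n+1)) K} (hF : IsMarkedSet K M B F) (m : E n) :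
    ∃ h₀ : MvPolynomial (Fin (n+1)) K,
      monomial m (1:K) - h₀ ∈ Ideal.span (F '' ↑B) ∧ ∀ m' ∈ h₀.support, m' ∉ M := by
  by_cases hm : m ∈ M
  · obtain ⟨b, e, hbB, hdec, hcond⟩ := EKexists hup hss hB (mdeg m) m hm rfl
    have hdeg : mdeg b + mdeg e = mdeg m := by rw [← mdeg_add, ← hdec]
    obtain ⟨h₀, h1, h2⟩ := reduce hup hss hB hF (mdeg m) (nu (mdeg m) e + 1) b e hbB hcond
      hdeg (Nat.lt_succ_self _)
    exact ⟨h₀, by rw [hdec]; exact h1, h2⟩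
  · refine ⟨monomial m 1, by simp, ?_⟩
    intro m' hm'
    have hc := MvPolynomial.mem_support_iff.1 hm'
    rw [coeff_monomial] at hc
    by_cases hmm : m = m'
    · subst hmm; exact hm
    · rw [if_neg hmm] at hc; exact absurd rfl hc


end NFaux

/-- Existence of `J`-normal forms: if `J` is strongly stable and `G` is a `J`-marked set,
every polynomial has a `J`-normal form modulo `(G)`. -/
theorem stmt5 {n : ℕ} {K : Type*} [Field K] (M : Set (E n)) (hup : UpClosed M)
    (hss : StronglyStable M) (B : Finset (E n)) (hB : IsMinBasis M B)
    (F : E n → MvPolynomial (Fin (n+1)) K) (hF : IsMarkedSet K M B F) :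
    ∀ h : MvPolynomial (Fin (n+1)) K,
      ∃ h₀ : MvPolynomial (Fin (n+1)) K,
        h - h₀ ∈ Ideal.span (F '' ↑B) ∧ ∀ m ∈ h₀.support, m ∉ M := by
  intro h
  have hper : ∀ m : E n, ∃ g : MvPolynomial (Fin (n+1)) K,
      monomial m (1:K) - g ∈ Ideal.span (F '' ↑B) ∧ ∀ m' ∈ g.support, m' ∉ M :=
    fun m => NFaux.normform_mon hup hss hB hF m
  choose g hg using hper
  refine ⟨∑ m ∈ h.support, C (MvPolynomial.coeff m h) * g m, ?_, ?_⟩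
  · have hexp : h - ∑ m ∈ h.support, C (MvPolynomial.coeff m h) * g m
        = ∑ m ∈ h.support,
            (monomial m (MvPolynomial.coeff m h) - C (MvPolynomial.coeff m h) * g m) := by
      rw [Finset.sum_sub_distrib, support_sum_monomial_coeff]
    rw [hexp]
    apply Ideal.sum_mem
    intro m _
    have hterm : monomial m (MvPolynomial.coeff m h) - C (MvPolynomial.coeff m h) * g m
        = C (MvPolynomial.coeff m h) * (monomial m 1 - g m) := by
      rw [mul_sub, C_mul_monomial, mul_one]
    rw [hterm]
    exact Ideal.mul_mem_left _ _ (hg m).1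
  · intro m hm hmM
    apply MvPolynomial.mem_support_iff.1 hm
    rw [coeff_sum]
    apply Finset.sum_eq_zero
    intro γ _
    rw [coeff_C_mul]
    have hms : MvPolynomial.coeff m (g γ) = 0 := by
      by_contra hc
      exact (hg γ).2 m (MvPolynomial.mem_support_iff.2 hc) hmM
    rw [hms, mul_zero]
end

section
/- Let J be a strongly stable monomial ideal and I a homogeneous ideal of S containing a J-marked set G. Then the residues of the monomials in N(J) generate S/I as a K-vector space; consequently dim_K I_m ≥ dim_K J_m for every m ≥ 0. -/
open MvPolynomial

variable (K : Type*) [Field K]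

lemma mdeg_add {n : ℕ} (a b : E n) : mdeg (a + b) = mdeg a + mdeg b := by
  unfold mdeg
  exact Finsupp.sum_add_index' (fun _ => rfl) (fun _ _ _ => rfl)

lemma mdeg_single {n : ℕ} (i : Fin (n+1)) (c : ℕ) : mdeg (Finsupp.single i c) = c := by
  unfold mdeg; exact Finsupp.sum_single_index rfl

lemma apply_le_mdeg {n : ℕ} (a : E n) (k : Fin (n+1)) : a k ≤ mdeg a := by
  by_cases h : a k = 0
  · simp [h]
  · exact Finset.single_le_sum (f := fun j => a j) (fun _ _ => Nat.zero_le _)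
      (Finsupp.mem_support_iff.mpr h)

lemma mdeg_eq_degree {n : ℕ} (a : E n) : mdeg a = Finsupp.degree a := rfl

lemma homog_mdeg {n : ℕ} {K : Type*} [Field K] {φ : MvPolynomial (Fin (n+1)) K} {m : ℕ}
    (h : φ ∈ homogeneousSubmodule (Fin (n+1)) K m) {d : E n} (hd : φ.coeff d ≠ 0) :
    mdeg d = m := by
  rw [mem_homogeneousSubmodule] at h
  rw [mdeg_eq_degree, Finsupp.degree_eq_weight_one]
  exact h hd
-- single variable lemma
lemma svl {n : ℕ} {M : Set (E n)} (hss : StronglyStable M) {γ b : E n} {i j : Fin (n+1)}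
    (hγ : γ ∉ M) (hb : b ∈ M) (h : γ + Finsupp.single i 1 = b + Finsupp.single j 1) :
    j < i := by
  have hco : ∀ k, γ k + (Finsupp.single i 1 : E n) k = b k + (Finsupp.single j 1 : E n) k := by
    intro k; rw [← Finsupp.add_apply, ← Finsupp.add_apply, h]
  rcases lt_trichotomy i j with hij | hij | hij
  · -- then γ = b - e_i + e_j ∈ M, contradiction
    exfalso
    have hbi : b i ≠ 0 := by
      have := hco i
      rw [Finsupp.single_apply, Finsupp.single_apply, if_pos rfl,
        if_neg (show j ≠ i from hij.ne')] at this
      omega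
    have : b - Finsupp.single i 1 + Finsupp.single j 1 = γ := by
      ext k
      have h1 := hco k
      simp only [Finsupp.add_apply, Finsupp.tsub_apply, Finsupp.single_apply] at h1 ⊢
      by_cases h2 : i = k <;> by_cases h3 : j = k <;> simp [h2, h3] at h1 ⊢ <;> omega
    exact hγ (this ▸ hss b hb i j hij hbi)
  · exfalso
    subst hij
    have : γ = b := by
      ext k; have := hco k; omega
    exact hγ (this ▸ hb)
  · exact hij
lemma supp_of_mem_span {n : ℕ} {K : Type*} [Field K] {S : Set (E n)}
    {p : MvPolynomial (Fin (n+1)) K}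
    (hp : p ∈ Submodule.span K ((fun m => monomial m (1:K)) '' S)) :
    ∀ τ, p.coeff τ ≠ 0 → τ ∈ S := by
  induction hp using Submodule.span_induction with
  | mem x hx =>
    obtain ⟨μ, hμ, rfl⟩ := hx
    intro τ hτ
    rw [coeff_monomial] at hτ
    split at hτ
    · next heq => exact heq ▸ hμ
    · exact absurd rfl hτ
  | zero => intro τ hτ; simp at hτ
  | add x y _ _ hx hy =>
    intro τ hτ
    rw [coeff_add] at hτ
    by_cases h : x.coeff τ = 0
    · exact hy τ (by intro h'; rw [h, h'] at hτ; simp at hτ)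
    · exact hx τ h
  | smul c x _ hx =>
    intro τ hτ
    rw [coeff_smul] at hτ
    exact hx τ (by intro h'; rw [h'] at hτ; simp at hτ)

lemma mem_span_of_supp {n : ℕ} {K : Type*} [Field K] {S : Set (E n)}
    {p : MvPolynomial (Fin (n+1)) K}
    (h : ∀ τ, p.coeff τ ≠ 0 → τ ∈ S) :
    p ∈ Submodule.span K ((fun m => monomial m (1:K)) '' S) := by
  rw [p.as_sum]
  apply Submodule.sum_mem
  intro v hv
  have : monomial v (p.coeff v) = (p.coeff v) • monomial v (1:K) := by
    rw [smul_monomial, smul_eq_mul, mul_one]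
  rw [this]
  exact Submodule.smul_mem _ _ (Submodule.subset_span
    ⟨v, h v (mem_support_iff.mp hv), rfl⟩)
lemma supp_of_mem_Jideal {n : ℕ} {K : Type*} [Field K] {M : Set (E n)} (hup : UpClosed M)
    {p : MvPolynomial (Fin (n+1)) K} (hp : p ∈ Jideal K M) :
    ∀ τ, p.coeff τ ≠ 0 → τ ∈ M := by
  induction hp using Submodule.span_induction with
  | mem x hx =>
    obtain ⟨μ, hμ, rfl⟩ := hx
    intro τ hτ
    rw [coeff_monomial] at hτ
    split at hτ
    · next heq => exact heq ▸ hμ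
    · exact absurd rfl hτ
  | zero => intro τ hτ; simp at hτ
  | add x y _ _ hx hy =>
    intro τ hτ
    rw [coeff_add] at hτ
    by_cases h : x.coeff τ = 0
    · exact hy τ (by intro h'; rw [h, h'] at hτ; simp at hτ)
    · exact hx τ h
  | smul c x _ hx =>
    intro τ hτ
    rw [smul_eq_mul, coeff_mul] at hτ
    obtain ⟨⟨u, v⟩, huv, hne⟩ := Finset.exists_ne_zero_of_sum_ne_zero hτ
    have hv : x.coeff v ≠ 0 := by
      intro h'; rw [h'] at hne; simp at hne
    have hvM := hx v hv
    have : τ = v + u := by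
      simp only [Finset.HasAntidiagonal.mem_antidiagonal] at huv
      rw [← huv]; exact (add_comm u v)
    exact this ▸ hup v hvM u
lemma finite_deg (n m : ℕ) : {α : E n | mdeg α = m}.Finite := by
  classical
  have : {α : E n | mdeg α = m} ⊆
      ↑(Finset.Iic ((Finsupp.equivFunOnFinite.symm (fun _ => m)) : E n)) := by
    intro α hα
    simp only [Finset.coe_Iic, Set.mem_Iic]
    rw [Finsupp.le_def]
    intro k
    have := apply_le_mdeg α k
    simpa [Finsupp.equivFunOnFinite] using this.trans_eq hα
  exact Set.Finite.subset (Finset.Iic _).finite_toSet this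

lemma homog_le_span (n m : ℕ) (K : Type*) [Field K] :
    homogeneousSubmodule (Fin (n+1)) K m ≤
      Submodule.span K ((fun v => monomial v (1:K)) '' {α : E n | mdeg α = m}) := by
  intro p hp
  rw [p.as_sum]
  apply Submodule.sum_mem
  intro v hv
  have hdeg : mdeg v = m := by
    rw [mem_homogeneousSubmodule] at hp
    rw [show mdeg v = Finsupp.degree v from rfl, Finsupp.degree_eq_weight_one]
    exact hp (mem_support_iff.mp hv)
  have : monomial v (p.coeff v) = (p.coeff v) • monomial v (1:K) := by
    rw [smul_monomial, smul_eq_mul, mul_one]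
  rw [this]
  exact Submodule.smul_mem _ _ (Submodule.subset_span ⟨v, hdeg, rfl⟩)

instance homogFD (n m : ℕ) (K : Type*) [Field K] :
    FiniteDimensional K ↥(homogeneousSubmodule (Fin (n+1)) K m) := by
  have h1 : FiniteDimensional K
      ↥(Submodule.span K ((fun v => monomial v (1:K)) '' {α : E n | mdeg α = m})) :=
    FiniteDimensional.span_of_finite K ((finite_deg n m).image _)
  exact Submodule.finiteDimensional_of_le (homog_le_span n m K)
lemma mono_mem_homog {n : ℕ} {K : Type*} [Field K] {v : E n} {m : ℕ} (h : mdeg v = m)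
    (c : K) : monomial v c ∈ homogeneousSubmodule (Fin (n+1)) K m := by
  rw [mem_homogeneousSubmodule]
  apply isHomogeneous_monomial
  rw [← h, show mdeg v = Finsupp.degree v from rfl, Finsupp.degree_eq_weight_one]

lemma mono_smul {n : ℕ} {K : Type*} [Field K] (v : E n) (c : K) :
    monomial v c = c • monomial v (1:K) := by
  rw [smul_monomial, smul_eq_mul, mul_one]
noncomputable def NSh (K : Type*) [Field K] {n : ℕ} (M : Set (E n)) (d : ℕ) :
    Submodule K (MvPolynomial (Fin (n+1)) K) :=
  Submodule.span K ((fun m => monomial m (1:K)) '' {γ | γ ∉ M ∧ mdeg γ = d})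

noncomputable def USub (K : Type*) [Field K] {n : ℕ} (M : Set (E n))
    (I : Ideal (MvPolynomial (Fin (n+1)) K)) (d : ℕ) : Submodule K (MvPolynomial (Fin (n+1)) K) :=
  (Submodule.restrictScalars K I ⊓ homogeneousSubmodule (Fin (n+1)) K d) ⊔ NSh K M d

lemma markedMem {n : ℕ} {K : Type*} [Field K] (M : Set (E n)) (B : Finset (E n))
    (F : E n → MvPolynomial (Fin (n+1)) K) (hF : IsMarkedSet K M B F)
    (I : Ideal (MvPolynomial (Fin (n+1)) K)) (hGI : ∀ b ∈ B, F b ∈ I)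
    {b : E n} (hbB : b ∈ B) : monomial b (1:K) ∈ USub K M I (mdeg b) := by
  obtain ⟨hcoeff, hhomog, htail⟩ := hF b hbB
  have hsplit : monomial b (1:K) = F b + (monomial b (1:K) - F b) := by ring
  rw [hsplit]
  apply Submodule.add_mem
  · exact Submodule.mem_sup_left (Submodule.mem_inf.mpr ⟨hGI _ hbB, hhomog⟩)
  · apply Submodule.mem_sup_right
    apply mem_span_of_supp
    intro τ hτ
    rw [coeff_sub, coeff_monomial] at hτ
    by_cases hτb : τ = b
    · exfalso; subst hτb; rw [if_pos rfl, hcoeff] at hτ; simp at hτ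
    · rw [if_neg (fun h => hτb h.symm)] at hτ
      have hτF : (F b).coeff τ ≠ 0 := by intro h; rw [h] at hτ; simp at hτ
      exact ⟨htail τ (mem_support_iff.mpr hτF) hτb, homog_mdeg hhomog hτF⟩

lemma keyQ {n : ℕ} {K : Type*} [Field K] (M : Set (E n)) (hup : UpClosed M)
    (hss : StronglyStable M) (B : Finset (E n)) (hB : IsMinBasis M B)
    (F : E n → MvPolynomial (Fin (n+1)) K) (hF : IsMarkedSet K M B F)
    (I : Ideal (MvPolynomial (Fin (n+1)) K))
    (hGI : ∀ b ∈ B, F b ∈ I) :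
    ∀ α : E n, monomial α (1:K) ∈ USub K M I (mdeg α) := by
  classical
  have hch : ∀ α : E n, ∃ b : E n, α ∈ M → b ∈ B ∧ b ≤ α := by
    intro α
    by_cases hα : α ∈ M
    · obtain ⟨b, hbB, hble⟩ := hB.2.1 α hα
      exact ⟨b, fun _ => ⟨hbB, hble⟩⟩
    · exact ⟨0, fun h => absurd h hα⟩
  choose bc hbc using hch
  set μ : E n → ℕ := fun α =>
    if h : (α - bc α).support.Nonempty then ((α - bc α).support.max' h).val + 1 else 0 with hμdef
  have hμle : ∀ α, μ α ≤ n + 1 := by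
    intro α
    rw [hμdef]
    dsimp only
    split
    · exact Nat.succ_le_succ (Fin.is_le _)
    · omega
  -- key fact: if α ∈ M then μ gives the head position, and svl controls it
  have hμlt : ∀ (τ : E n) (i : Fin (n+1)), τ ∉ M → (τ + Finsupp.single i 1) ∈ M →
      μ (τ + Finsupp.single i 1) < i.val + 1 := by
    intro τ i hτ hα'
    set α' := τ + Finsupp.single i 1 with hα'def
    rw [hμdef]
    dsimp only
    split
    · next hne =>
      have hbcle : bc α' ≤ α' := (hbc α' hα').2
      have hbcM : bc α' ∈ M := hB.1 (hbc α' hα').1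
      set j := (α' - bc α').support.max' hne with hjdef
      have hηj : (α' - bc α') j ≠ 0 :=
        Finsupp.mem_support_iff.mp ((α' - bc α').support.max'_mem hne)
      have hj1 : bc α' j + 1 ≤ α' j := by
        have h1 := Finsupp.le_def.mp hbcle j
        have h2 : (α' - bc α') j = α' j - bc α' j := Finsupp.tsub_apply _ _ _
        omega
      set b' := α' - Finsupp.single j 1 with hb'def
      have hb'c : ∀ k, b' k = α' k - (Finsupp.single j (1:ℕ)) k := by
        intro k; rw [hb'def, Finsupp.tsub_apply]
      have hb'M : b' ∈ M := by
        have heq2 : b' = bc α' + (b' - bc α') := by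
          ext k
          have h1 := Finsupp.le_def.mp hbcle k
          have h2 := hb'c k
          have h5 : (bc α' + (b' - bc α')) k = bc α' k + (b' k - bc α' k) := by
            rw [Finsupp.add_apply, Finsupp.tsub_apply]
          rw [h5]
          by_cases hk : j = k
          · subst hk
            have h4 : (Finsupp.single j (1:ℕ)) j = 1 := Finsupp.single_eq_same
            omega
          · have h4 : (Finsupp.single j (1:ℕ)) k = 0 := Finsupp.single_eq_of_ne' hk
            omega
        rw [heq2]; exact hup _ hbcM _
      have heq : τ + Finsupp.single i 1 = b' + Finsupp.single j 1 := by
        ext k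
        have h3 : α' k = τ k + (Finsupp.single i (1:ℕ)) k := by
          rw [hα'def, Finsupp.add_apply]
        have h2 := hb'c k
        rw [Finsupp.add_apply, Finsupp.add_apply]
        by_cases hk : j = k
        · subst hk
          have h4 : (Finsupp.single j (1:ℕ)) j = 1 := Finsupp.single_eq_same
          omega
        · have h4 : (Finsupp.single j (1:ℕ)) k = 0 := Finsupp.single_eq_of_ne' hk
          omega
      have hji := svl hss hτ hb'M heq
      have : (j : ℕ) < (i : ℕ) := hji
      omega
    · omega
  -- main strong induction
  suffices H : ∀ N : ℕ, ∀ α : E n, mdeg α * (n+2) + μ α ≤ N → monomial α (1:K) ∈ USub K M I (mdeg α) by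
    intro α; exact H _ α le_rfl
  intro N
  induction N using Nat.strong_induction_on with
  | _ N ih =>
  intro α hΩ
  by_cases hαM : α ∈ M
  swap
  · -- α ∉ M : directly in NSh
    exact Submodule.mem_sup_right (Submodule.subset_span ⟨α, ⟨hαM, rfl⟩, rfl⟩)
  · obtain ⟨hbB, hble⟩ := hbc α hαM
    by_cases hη : (α - bc α).support.Nonempty
    swap
    · -- η = 0 : α = bc α ∈ B, use the marked polynomial
      have hαb : α = bc α := by
        rw [Finset.not_nonempty_iff_eq_empty] at hη
        ext k
        have h1 := Finsupp.le_def.mp hble k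
        have h2 : (α - bc α) k = 0 := by
          rw [← Finsupp.notMem_support_iff]
          simp [hη]
        rw [Finsupp.tsub_apply] at h2
        omega
      rw [hαb]
      exact markedMem M B F hF I hGI hbB
    · -- η ≠ 0 : reduce by one variable
      set i := ((α - bc α).support.max' hη) with hidef
      have hisupp := (α - bc α).support.max'_mem hη
      have hηi : (α - bc α) i ≠ 0 := Finsupp.mem_support_iff.mp hisupp
      have hαi : 1 ≤ α i := by
        rw [Finsupp.tsub_apply] at hηi; omega
      have hμα : μ α = i.val + 1 := by
        rw [hμdef]; dsimp only; rw [dif_pos hη]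
      set β := α - Finsupp.single i 1 with hβdef
      have hβα : α = β + Finsupp.single i 1 := by
        ext k
        have h2 : ((β + Finsupp.single i 1 : E n)) k = (α k - (Finsupp.single i (1:ℕ)) k) +
            (Finsupp.single i (1:ℕ)) k := by
          rw [Finsupp.add_apply, hβdef, Finsupp.tsub_apply]
        rw [h2]
        by_cases hk : i = k
        · subst hk
          have h4 : (Finsupp.single i (1:ℕ)) i = 1 := Finsupp.single_eq_same
          omega
        · have h4 : (Finsupp.single i (1:ℕ)) k = 0 := Finsupp.single_eq_of_ne' hk
          omega
      have hdegβ : mdeg β + 1 = mdeg α := by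
        conv_rhs => rw [hβα]
        rw [mdeg_add, mdeg_single]
      have hβmem : monomial β (1:K) ∈ USub K M I (mdeg β) := by
        apply ih (mdeg β * (n+2) + μ β)
        · have h1 := hμle β
          have hmul : mdeg β * (n+2) + (n+2) = mdeg α * (n+2) := by
            rw [← hdegβ]; ring
          omega
        · exact le_rfl
      rw [USub, Submodule.mem_sup] at hβmem
      obtain ⟨f, hf, g, hg, hfg⟩ := hβmem
      have hXgen : ∀ g' ∈ NSh K M (mdeg β), X i * g' ∈ USub K M I (mdeg α) := by
        intro g' hg'
        induction hg' using Submodule.span_induction with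
        | mem x hx =>
          obtain ⟨τ, ⟨hτM, hτdeg⟩, rfl⟩ := hx
          have hXmono : X i * monomial τ (1:K) = monomial (τ + Finsupp.single i 1) (1:K) := by
            rw [X, monomial_mul, one_mul]
            exact congrArg (fun v => (monomial v) (1:K)) (add_comm _ _)
          rw [hXmono]
          set α' := τ + Finsupp.single i 1 with hα'def
          have hdegα' : mdeg α' = mdeg α := by
            rw [hα'def, mdeg_add, mdeg_single, hτdeg, hdegβ]
          by_cases hα'M : α' ∈ M
          · have hμα' := hμlt τ i hτM (hα'def ▸ hα'M)
            rw [← hα'def] at hμα'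
            rw [← hdegα']
            apply ih (mdeg α' * (n+2) + μ α')
            · have hmul : mdeg α' * (n+2) = mdeg α * (n+2) := by rw [hdegα']
              omega
            · exact le_rfl
          · rw [← hdegα']
            exact Submodule.mem_sup_right (Submodule.subset_span ⟨α', ⟨hα'M, rfl⟩, rfl⟩)
        | zero => rw [mul_zero]; exact Submodule.zero_mem _
        | add x y _ _ hx hy =>
          rw [mul_add]; exact Submodule.add_mem _ hx hy
        | smul c x _ hx =>
          rw [mul_smul_comm]; exact Submodule.smul_mem _ _ hx
      have hXg : X i * g ∈ USub K M I (mdeg α) := hXgen g hg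
      have hXf : X i * f ∈ USub K M I (mdeg α) := by
        apply Submodule.mem_sup_left
        obtain ⟨hfI, hfhom⟩ := Submodule.mem_inf.mp hf
        refine Submodule.mem_inf.mpr ⟨Ideal.mul_mem_left I _ hfI, ?_⟩
        rw [mem_homogeneousSubmodule, ← hdegβ]
        rw [mem_homogeneousSubmodule] at hfhom
        have hx1 : (X i * f).IsHomogeneous (1 + mdeg β) :=
          (isHomogeneous_X K i).mul hfhom
        have h2 : 1 + mdeg β = mdeg β + 1 := Nat.add_comm _ _
        exact h2 ▸ hx1
      have : monomial α (1:K) = X i * f + X i * g := by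
        rw [← mul_add, hfg, X, monomial_mul, one_mul]
        refine congrArg (fun v => (monomial v) (1:K)) ?_
        rw [hβα]; exact add_comm _ _
      rw [this]
      exact Submodule.add_mem _ hXf hXg


/-- If `J` is strongly stable and the homogeneous ideal `I` contains a `J`-marked set,
then `N(J)` generates `S/I` as a `K`-vector space, and `dim_K I_m ≥ dim_K J_m`. -/
theorem stmt6 {n : ℕ} {K : Type*} [Field K] (M : Set (E n)) (hup : UpClosed M)
    (hss : StronglyStable M) (B : Finset (E n)) (hB : IsMinBasis M B)
    (F : E n → MvPolynomial (Fin (n+1)) K) (hF : IsMarkedSet K M B F)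
    (I : Ideal (MvPolynomial (Fin (n+1)) K))
    (hhom : ∀ f ∈ I, ∀ k : ℕ, homogeneousComponent k f ∈ I)
    (hGI : ∀ b ∈ B, F b ∈ I) :
    Submodule.restrictScalars K I ⊔ NSpan K M = ⊤ ∧
      ∀ m : ℕ, HF K (Jideal K M) m ≤ HF K I m := by
  classical
  have hkey := keyQ M hup hss B hB F hF I hGI
  constructor
  · rw [eq_top_iff]
    intro p _
    rw [p.as_sum]
    apply Submodule.sum_mem
    intro v _
    rw [mono_smul]
    apply Submodule.smul_mem
    have hle : USub K M I (mdeg v) ≤ Submodule.restrictScalars K I ⊔ NSpan K M := by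
      apply sup_le
      · exact le_trans inf_le_left le_sup_left
      · refine le_trans ?_ le_sup_right
        exact Submodule.span_mono (Set.image_mono (fun γ hγ => hγ.1))
    exact hle (hkey v)
  · intro m
    set SM := homogeneousSubmodule (Fin (n+1)) K m with hSM
    set A := Submodule.restrictScalars K I ⊓ SM with hA
    set Aj := Submodule.restrictScalars K (Jideal K M) ⊓ SM with hAj
    set Bn := NSh K M m with hBn
    set C := Submodule.span K ((fun v => monomial v (1:K)) ''
      {α : E n | α ∈ M ∧ mdeg α = m}) with hC
    haveI : FiniteDimensional K ↥SM := homogFD n m K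
    have hBnSM : Bn ≤ SM := by
      rw [hBn, NSh, Submodule.span_le]
      rintro x ⟨γ, ⟨_, hγd⟩, rfl⟩
      exact mono_mem_homog hγd 1
    have hCSM : C ≤ SM := by
      rw [hC, Submodule.span_le]
      rintro x ⟨γ, ⟨_, hγd⟩, rfl⟩
      exact mono_mem_homog hγd 1
    haveI hfA : FiniteDimensional K ↥A := Submodule.finiteDimensional_of_le inf_le_right
    haveI hfAj : FiniteDimensional K ↥Aj := Submodule.finiteDimensional_of_le inf_le_right
    haveI hfBn : FiniteDimensional K ↥Bn := Submodule.finiteDimensional_of_le hBnSM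
    haveI hfC : FiniteDimensional K ↥C := Submodule.finiteDimensional_of_le hCSM
    haveI hfAB : FiniteDimensional K ↥(A ⊔ Bn) := Submodule.finiteDimensional_sup A Bn
    -- SM ≤ A ⊔ Bn
    have hSMle : SM ≤ A ⊔ Bn := by
      intro p hp
      rw [p.as_sum]
      apply Submodule.sum_mem
      intro v hv
      have hdeg : mdeg v = m := homog_mdeg hp (mem_support_iff.mp hv)
      rw [mono_smul]
      apply Submodule.smul_mem
      have := hkey v
      rw [hdeg] at this
      exact this
    have h1 : Module.finrank K ↥SM ≤ Module.finrank K ↥A + Module.finrank K ↥Bn :=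
      le_trans (Submodule.finrank_mono hSMle) (Submodule.finrank_add_le_finrank_add_finrank A Bn)
    -- Aj ≤ C
    have hAjC : Aj ≤ C := by
      intro p hp
      obtain ⟨hpJ, hpSM⟩ := Submodule.mem_inf.mp hp
      apply mem_span_of_supp
      intro τ hτ
      exact ⟨supp_of_mem_Jideal hup hpJ τ hτ, homog_mdeg hpSM hτ⟩
    have h2 : Module.finrank K ↥Aj ≤ Module.finrank K ↥C := Submodule.finrank_mono hAjC
    -- C ⊓ Bn = ⊥
    have hCB : C ⊓ Bn = ⊥ := by
      rw [eq_bot_iff]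
      intro p hp
      obtain ⟨hpC, hpBn⟩ := Submodule.mem_inf.mp hp
      have : p = 0 := by
        by_contra hne
        obtain ⟨τ, hτ⟩ := ne_zero_iff.mp hne
        exact (supp_of_mem_span hpBn τ hτ).1 (supp_of_mem_span hpC τ hτ).1
      simp [this]
    have h3 : Module.finrank K ↥C + Module.finrank K ↥Bn = Module.finrank K ↥(C ⊔ Bn) := by
      have := Submodule.finrank_sup_add_finrank_inf_eq C Bn
      rw [hCB] at this
      simp only [finrank_bot] at this
      omega
    have h4 : Module.finrank K ↥(C ⊔ Bn) ≤ Module.finrank K ↥SM :=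
      Submodule.finrank_mono (sup_le hCSM hBnSM)
    have hfinal : Module.finrank K ↥Aj ≤ Module.finrank K ↥A := by omega
    exact hfinal
end

section
/- Let J be a strongly stable ideal and I a homogeneous ideal of S = K[x_0,...,x_n]. Then N(J) is a K-vector space basis of S/I if and only if I is generated by a J-marked basis. -/
open MvPolynomial

variable (K : Type*) [Field K]

section MyAux

variable {n : ℕ} {K : Type*} [Field K]

lemma my_mdeg_add (a b : E n) : mdeg (a + b) = mdeg a + mdeg b :=
  Finsupp.sum_add_index' (fun _ => rfl) (fun _ _ _ => rfl)

lemma my_mdeg_single (k : Fin (n+1)) : mdeg (Finsupp.single k 1) = 1 :=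
  Finsupp.sum_single_index rfl

lemma my_mdeg_degree (m : E n) : Finsupp.degree m = mdeg m := rfl

/-- The submodule of polynomials supported outside `M`. -/
def myNSupp (M : Set (E n)) (K : Type*) [Field K] :
    Submodule K (MvPolynomial (Fin (n+1)) K) where
  carrier := {p | ∀ m ∈ p.support, m ∉ M}
  zero_mem' := by intro m hm; simp at hm
  add_mem' := by
    intro p q hp hq m hm
    rcases Finset.mem_union.mp (MvPolynomial.support_add hm) with h | h
    · exact hp m h
    · exact hq m h
  smul_mem' := by
    intro c p hp m hm
    exact hp m (MvPolynomial.support_smul hm)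

lemma my_mem_NSpan_iff (M : Set (E n)) (p : MvPolynomial (Fin (n+1)) K) :
    p ∈ NSpan K M ↔ ∀ m ∈ p.support, m ∉ M := by
  constructor
  · intro hp
    have hle : NSpan K M ≤ myNSupp M K := by
      rw [NSpan, Submodule.span_le]
      rintro x ⟨m, hm, rfl⟩
      intro m' hm'
      have := MvPolynomial.support_monomial_subset hm'
      rw [Finset.mem_singleton] at this
      subst this
      exact hm
    exact hle hp
  · intro h
    rw [← p.support_sum_monomial_coeff]
    refine Submodule.sum_mem _ fun m hm => ?_
    have heq : (monomial m (coeff m p) : MvPolynomial (Fin (n+1)) K)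
        = coeff m p • monomial m 1 := by rw [smul_monomial, smul_eq_mul, mul_one]
    rw [heq]
    exact Submodule.smul_mem _ _ (Submodule.subset_span ⟨m, h m hm, rfl⟩)

lemma my_down {M : Set (E n)} (hss : StronglyStable M) {β : E n} {i j : Fin (n+1)}
    (hij : i < j) (hβi : β i ≠ 0) (hβj : β j ≠ 0)
    (h : β - Finsupp.single j 1 ∈ M) : β - Finsupp.single i 1 ∈ M := by
  have hne : i ≠ j := ne_of_lt hij
  have h2 := hss _ h i j hij (by
    rw [Finsupp.tsub_apply, Finsupp.single_apply, if_neg (fun he => hne he.symm)]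
    simpa using hβi)
  have heq : β - Finsupp.single j 1 - Finsupp.single i 1 + Finsupp.single j 1
      = β - Finsupp.single i 1 := by
    ext a
    simp only [Finsupp.add_apply, Finsupp.tsub_apply, Finsupp.single_apply]
    have hβj' : β j ≠ 0 := hβj
    split_ifs with h1 h2 h3
    · exact absurd (h2.trans h1.symm) hne
    · subst h1; omega
    · omega
    · omega
  rwa [heq] at h2

open Classical in
/-- `nuM M α = 1 + max {j : α_j ≠ 0 and α - e_j ∈ M}` (0 if none). -/
noncomputable def nuM (M : Set (E n)) (α : E n) : ℕ :=
  ((Finset.univ : Finset (Fin (n+1))).filter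
    (fun j => α j ≠ 0 ∧ α - Finsupp.single j 1 ∈ M)).sup (fun j => (j : ℕ) + 1)

lemma nuM_le (M : Set (E n)) (α : E n) : nuM M α ≤ n + 1 :=
  Finset.sup_le fun j _ => Nat.succ_le_succ (Nat.lt_succ_iff.mp j.isLt)

lemma nuM_ge {M : Set (E n)} {α : E n} {k : Fin (n+1)}
    (hk0 : α k ≠ 0) (hkM : α - Finsupp.single k 1 ∈ M) : (k : ℕ) + 1 ≤ nuM M α := by
  classical
  refine Finset.le_sup (f := fun j : Fin (n+1) => (j : ℕ) + 1) ?_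
  simp only [Finset.mem_filter, Finset.mem_univ, true_and]
  exact ⟨hk0, hkM⟩

lemma nuM_lt {M : Set (E n)} (hss : StronglyStable M) {β : E n} {k : Fin (n+1)}
    (hk0 : β k ≠ 0) (hkN : β - Finsupp.single k 1 ∉ M) : nuM M β ≤ (k : ℕ) := by
  classical
  refine Finset.sup_le fun j hj => ?_
  simp only [Finset.mem_filter, Finset.mem_univ, true_and] at hj
  obtain ⟨hj0, hjM⟩ := hj
  by_contra hcon
  have hkj : (k : ℕ) ≤ (j : ℕ) := by omega
  rcases eq_or_lt_of_le hkj with heq | hlt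
  · have : k = j := Fin.ext heq
    subst this
    exact hkN hjM
  · exact hkN (my_down hss (show k < j from hlt) hk0 hj0 hjM)

lemma my_key {M : Set (E n)} (hup : UpClosed M) (hss : StronglyStable M)
    {B : Finset (E n)} (hB : IsMinBasis M B)
    {F : E n → MvPolynomial (Fin (n+1)) K} (hF : IsMarkedSet K M B F) (α : E n) :
    (monomial α 1 : MvPolynomial (Fin (n+1)) K) ∈
      Submodule.restrictScalars K (Ideal.span (F '' ↑B)) ⊔
        (NSpan K M ⊓ homogeneousSubmodule (Fin (n+1)) K (mdeg α)) := by
  suffices H : ∀ N : ℕ, ∀ α : E n, mdeg α * (n+2) + nuM M α ≤ N →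
      (monomial α 1 : MvPolynomial (Fin (n+1)) K) ∈
        Submodule.restrictScalars K (Ideal.span (F '' ↑B)) ⊔
          (NSpan K M ⊓ homogeneousSubmodule (Fin (n+1)) K (mdeg α)) from H _ α le_rfl
  intro N
  induction N using Nat.strong_induction_on with
  | _ N IH =>
  intro α hN
  by_cases hαM : α ∈ M
  · by_cases hex : ∃ k : Fin (n+1), α k ≠ 0 ∧ α - Finsupp.single k 1 ∈ M
    · obtain ⟨k, hk0, hkM⟩ := hex
      have hkle : Finsupp.single k 1 ≤ α :=
        Finsupp.single_le_iff.mpr (Nat.one_le_iff_ne_zero.mpr hk0)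
      have hγα : (α - Finsupp.single k 1) + Finsupp.single k 1 = α :=
        tsub_add_cancel_of_le hkle
      set γ := α - Finsupp.single k 1 with hγdef
      have hdeg : mdeg α = mdeg γ + 1 := by
        rw [← hγα, my_mdeg_add, my_mdeg_single]
      have hμγ : mdeg γ * (n+2) + nuM M γ < N := by
        have h1 : nuM M γ ≤ n + 1 := nuM_le M γ
        rw [hdeg, add_one_mul] at hN
        generalize mdeg γ * (n+2) = b at hN ⊢
        omega
      have hIH := IH _ hμγ γ le_rfl
      rw [Submodule.mem_sup] at hIH
      obtain ⟨p, hp, q, hq, hpq⟩ := hIH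
      obtain ⟨hqN, hqH⟩ := Submodule.mem_inf.mp hq
      have hmul : (monomial α 1 : MvPolynomial (Fin (n+1)) K)
          = monomial (Finsupp.single k 1) 1 * p + monomial (Finsupp.single k 1) 1 * q := by
        rw [← mul_add, hpq, monomial_mul, one_mul, add_comm (Finsupp.single k 1) γ, hγα]
      rw [hmul]
      refine Submodule.add_mem _ (Submodule.mem_sup_left ?_) ?_
      · exact Ideal.mul_mem_left _ _ hp
      · rw [← q.support_sum_monomial_coeff, Finset.mul_sum]
        refine Submodule.sum_mem _ fun τ hτ => ?_
        have hτN : τ ∉ M := (my_mem_NSpan_iff M q).mp hqN τ hτ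
        have hτd : mdeg τ = mdeg γ := by
          have hqh := (mem_homogeneousSubmodule _ _).mp hqH
          have hc : coeff τ q ≠ 0 := mem_support_iff.mp hτ
          by_contra hne
          exact hc (hqh.coeff_eq_zero (by rwa [my_mdeg_degree]))
        rw [monomial_mul, one_mul]
        set β := Finsupp.single k 1 + τ with hβdef
        have hβd : mdeg β = mdeg α := by
          rw [hβdef, my_mdeg_add, my_mdeg_single, hτd, hdeg]
          omega
        have hmono : (monomial β (coeff τ q) : MvPolynomial (Fin (n+1)) K)
            = coeff τ q • monomial β 1 := by rw [smul_monomial, smul_eq_mul, mul_one]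
        rw [hmono]
        refine Submodule.smul_mem _ _ ?_
        by_cases hβM : β ∈ M
        · have hβk : β k ≠ 0 := by
            rw [hβdef]
            simp [Finsupp.add_apply, Finsupp.single_eq_same]
          have hβτ : β - Finsupp.single k 1 = τ := by
            rw [hβdef]; exact add_tsub_cancel_left _ _
          have hν : nuM M β ≤ (k : ℕ) := nuM_lt hss hβk (hβτ ▸ hτN)
          have h2 : (k : ℕ) + 1 ≤ nuM M α := nuM_ge hk0 hkM
          have hμβ : mdeg β * (n+2) + nuM M β < N := by
            rw [hβd]
            generalize mdeg α * (n+2) = b at hN ⊢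
            omega
          have := IH _ hμβ β le_rfl
          rwa [hβd] at this
        · refine Submodule.mem_sup_right (Submodule.mem_inf.mpr ⟨?_, ?_⟩)
          · exact Submodule.subset_span ⟨β, hβM, rfl⟩
          · rw [mem_homogeneousSubmodule, ← hβd]
            exact isHomogeneous_monomial _ (my_mdeg_degree β)
    · push_neg at hex
      have hαB : α ∈ B := by
        obtain ⟨b, hbB, hble⟩ := hB.2.1 α hαM
        rcases eq_or_ne b α with rfl | hne
        · exact hbB
        · exfalso
          obtain ⟨j, hj⟩ : ∃ j, b j ≠ α j := by
            by_contra hcon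
            push_neg at hcon
            exact hne (Finsupp.ext hcon)
          have hjle : b j ≤ α j := hble j
          have hjlt : b j < α j := lt_of_le_of_ne hjle hj
          have hj0 : α j ≠ 0 := by omega
          have hble' : b ≤ α - Finsupp.single j 1 := by
            rw [Finsupp.le_def]
            intro a
            rw [Finsupp.tsub_apply, Finsupp.single_apply]
            have := hble a
            split_ifs with h1
            · subst h1; omega
            · omega
          have hmem : α - Finsupp.single j 1 ∈ M := by
            have := hup b (hB.1 hbB) (α - Finsupp.single j 1 - b)
            rwa [add_tsub_cancel_of_le hble'] at this
          exact hex j hj0 hmem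
      obtain ⟨hc1, hhomF, hsuppF⟩ := hF α hαB
      have hsplit : (monomial α 1 : MvPolynomial (Fin (n+1)) K)
          = F α + (monomial α 1 - F α) := by ring
      rw [hsplit]
      refine Submodule.add_mem _ (Submodule.mem_sup_left ?_)
        (Submodule.mem_sup_right (Submodule.mem_inf.mpr ⟨?_, ?_⟩))
      · exact Ideal.subset_span ⟨α, hαB, rfl⟩
      · rw [my_mem_NSpan_iff]
        intro m hm
        have hcm : coeff m (monomial α 1 - F α) ≠ 0 := mem_support_iff.mp hm
        rcases eq_or_ne m α with rfl | hma
        · exfalso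
          apply hcm
          rw [coeff_sub, coeff_monomial, if_pos rfl, hc1, sub_self]
        · refine hsuppF m ?_ hma
          rw [mem_support_iff]
          intro h0
          apply hcm
          rw [coeff_sub, coeff_monomial, if_neg (fun he => hma he.symm), h0, sub_zero]
      · exact Submodule.sub_mem _
          (by rw [mem_homogeneousSubmodule]
              exact isHomogeneous_monomial _ (my_mdeg_degree α)) hhomF
  · refine Submodule.mem_sup_right (Submodule.mem_inf.mpr ⟨?_, ?_⟩)
    · exact Submodule.subset_span ⟨α, hαM, rfl⟩
    · rw [mem_homogeneousSubmodule]
      exact isHomogeneous_monomial _ (my_mdeg_degree α)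

end MyAux

/-- For `J` strongly stable and `I` homogeneous, `N(J)` is a `K`-basis of `S/I`
iff `I` is generated by a `J`-marked basis. -/
theorem stmt8 {n : ℕ} {K : Type*} [Field K] (M : Set (E n)) (hup : UpClosed M)
    (hss : StronglyStable M) (B : Finset (E n)) (hB : IsMinBasis M B)
    (I : Ideal (MvPolynomial (Fin (n+1)) K))
    (hhom : ∀ f ∈ I, ∀ k : ℕ, homogeneousComponent k f ∈ I) :
    IsMarkedBasisIdeal K M I ↔
      ∃ F : E n → MvPolynomial (Fin (n+1)) K,
        IsMarkedSet K M B F ∧ Ideal.span (F '' ↑B) = I ∧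
        IsMarkedBasisIdeal K M (Ideal.span (F '' ↑B)) := by
  constructor
  · rintro ⟨hinf, hsup⟩
    have hch : ∀ m : E n, ∃ p, p ∈ I ∧ (monomial m (1:K) - p) ∈ NSpan K M := by
      intro m
      have hm : (monomial m (1:K)) ∈ Submodule.restrictScalars K I ⊔ NSpan K M := by
        rw [hsup]; trivial
      rw [Submodule.mem_sup] at hm
      obtain ⟨p, hp, q, hq, hpq⟩ := hm
      refine ⟨p, hp, ?_⟩
      have : monomial m (1:K) - p = q := by rw [← hpq]; ring
      rwa [this]
    choose P hPI hPN using hch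
    set F : E n → MvPolynomial (Fin (n+1)) K :=
      fun m => homogeneousComponent (mdeg m) (P m) with hFdef
    have hcomp : ∀ m : E n,
        homogeneousComponent (mdeg m) (monomial m (1:K)) = monomial m 1 := by
      intro m
      ext d
      rw [coeff_homogeneousComponent, coeff_monomial]
      by_cases hdm : m = d
      · subst hdm
        rw [if_pos rfl, if_pos (my_mdeg_degree m)]
      · rw [if_neg hdm]
        split_ifs <;> rfl
    have hFeq : ∀ m : E n,
        F m = monomial m 1 - homogeneousComponent (mdeg m) (monomial m 1 - P m) := by
      intro m
      rw [hFdef, map_sub, hcomp m]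
      exact (sub_sub_cancel _ _).symm
    have hQN : ∀ m : E n,
        homogeneousComponent (mdeg m) (monomial m (1:K) - P m) ∈ NSpan K M := by
      intro m
      rw [my_mem_NSpan_iff]
      intro d hd
      have hc := mem_support_iff.mp hd
      rw [coeff_homogeneousComponent] at hc
      have hc2 : coeff d (monomial m (1:K) - P m) ≠ 0 := by
        intro h0
        apply hc
        split_ifs <;> simp [h0]
      exact (my_mem_NSpan_iff M _).mp (hPN m) d (mem_support_iff.mpr hc2)
    have hms : IsMarkedSet K M B F := by
      intro b hbB
      have hbM : b ∈ M := hB.1 hbB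
      refine ⟨?_, ?_, ?_⟩
      · have h0 : coeff b (monomial b (1:K) - P b) = 0 := by
          by_contra hc
          exact ((my_mem_NSpan_iff M _).mp (hPN b) b (mem_support_iff.mpr hc)) hbM
        rw [hFeq b, coeff_sub, coeff_monomial, if_pos rfl, coeff_homogeneousComponent,
          if_pos (my_mdeg_degree b), h0, sub_zero]
      · rw [hFdef, mem_homogeneousSubmodule]
        exact homogeneousComponent_isHomogeneous _ _
      · intro m hm hmb
        have hc := mem_support_iff.mp hm
        rw [hFeq b] at hc
        have hc2 : coeff m (homogeneousComponent (mdeg b) (monomial b (1:K) - P b)) ≠ 0 := by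
          intro h0
          apply hc
          rw [coeff_sub, coeff_monomial, if_neg (fun he => hmb he.symm), h0, sub_zero]
        exact (my_mem_NSpan_iff M _).mp (hQN b) m (mem_support_iff.mpr hc2)
    have hle : Ideal.span (F '' ↑B) ≤ I := by
      rw [Ideal.span_le]
      rintro x ⟨b, _, rfl⟩
      exact hhom (P b) (hPI b) (mdeg b)
    have hge : I ≤ Ideal.span (F '' ↑B) := by
      intro f hf
      have hT : f ∈ Submodule.restrictScalars K (Ideal.span (F '' ↑B)) ⊔ NSpan K M := by
        rw [← f.support_sum_monomial_coeff]
        refine Submodule.sum_mem _ fun m _ => ?_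
        have heq : (monomial m (coeff m f) : MvPolynomial (Fin (n+1)) K)
            = coeff m f • monomial m 1 := by rw [smul_monomial, smul_eq_mul, mul_one]
        rw [heq]
        refine Submodule.smul_mem _ _ ?_
        have hmono : Submodule.restrictScalars K (Ideal.span (F '' ↑B)) ⊔
            (NSpan K M ⊓ homogeneousSubmodule (Fin (n+1)) K (mdeg m)) ≤
            Submodule.restrictScalars K (Ideal.span (F '' ↑B)) ⊔ NSpan K M :=
          sup_le_sup_left inf_le_left _
        exact hmono (my_key hup hss hB hms m)
      rw [Submodule.mem_sup] at hT
      obtain ⟨p, hp, q, hq, hpq⟩ := hT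
      have hpI : p ∈ I := hle hp
      have hqI : q ∈ Submodule.restrictScalars K I := by
        have hqe : q = f - p := by rw [← hpq]; ring
        rw [hqe]
        exact Submodule.sub_mem _ hf hpI
      have hq0 : q = 0 := by
        have hmem : q ∈ Submodule.restrictScalars K I ⊓ NSpan K M :=
          Submodule.mem_inf.mpr ⟨hqI, hq⟩
        rwa [hinf, Submodule.mem_bot] at hmem
      rw [← hpq, hq0, add_zero]
      exact hp
    have hspan : Ideal.span (F '' ↑B) = I := le_antisymm hle hge
    exact ⟨F, hms, hspan, by rw [hspan]; exact ⟨hinf, hsup⟩⟩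
  · rintro ⟨F, -, hspan, hmb⟩
    rwa [hspan] at hmb
end

section
/- Let J be a strongly stable ideal, G a J-marked set, and for each degree m let V_m be as defined. For every element g_β = x^δ f_α of V_m, either x^δ = 1 or max(x^δ) ≤ min(x^α); in particular when x^δ ≠ 1, min(x^δ) equals min of the head term x^{δ+α} of g_β. -/
open MvPolynomial

variable (K : Type*) [Field K]

/-- The inductively defined sets `V_m` (as sets of pairs `(δ, α)` representing
`x^δ · f_α`, with head term `x^{δ+α}`): `V_{α_J} = G_{α_J}`, and `g_β = x_i · g_ε ∈ V_m`
where `x_i = min(x^β)` and `g_ε ∈ V_{m-1}` has head term `x^β / x_i`. -/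
inductive IsV {n : ℕ} (B : Finset (E n)) : E n → E n → Prop
  | base (α : E n) (hα : α ∈ B) : IsV B 0 α
  | step (δ α : E n) (i : Fin (n+1)) (h : IsV B δ α)
      (hmin : ∀ j ∈ (δ + α + Finsupp.single i 1).support, i ≤ j) :
      IsV B (δ + Finsupp.single i 1) α

variable {n : ℕ} {K : Type*} [Field K]

/-- One step of the rewriting procedure along the sets `V_m`: cancel the coefficient of
the head term `x^{δ+α}` of an element `x^δ f_α` of some `V_m`. -/
def VRed (B : Finset (E n)) (F : E n → MvPolynomial (Fin (n+1)) K)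
    (h h' : MvPolynomial (Fin (n+1)) K) : Prop :=
  ∃ δ α : E n, IsV B δ α ∧ h.coeff (δ + α) ≠ 0 ∧
    h' = h - (h.coeff (δ + α)) • (monomial δ (1:K) * F α)

/-- The `S`-polynomial `S(f_α, f_α') = x^β f_α − x^{β'} f_{α'}` where
`x^{β+α} = x^{β'+α'} = lcm(x^α, x^{α'})`. -/
noncomputable def Spoly (F : E n → MvPolynomial (Fin (n+1)) K) (α α' : E n) :
    MvPolynomial (Fin (n+1)) K :=
  monomial (α ⊔ α' - α) (1:K) * F α - monomial (α ⊔ α' - α') (1:K) * F α'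

/-- Degree reverse lexicographic order (`x_0 < x_1 < … < x_n`): `δ <_{drl} δ'` iff
`|δ| < |δ'|`, or the degrees agree and the first nonzero entry of `δ' − δ` is negative. -/
def drlLT {n : ℕ} (δ δ' : E n) : Prop :=
  mdeg δ < mdeg δ' ∨ (mdeg δ = mdeg δ' ∧ ∃ i, δ' i < δ i ∧ ∀ j < i, δ j = δ' j)

/-- The order `≺_m` on `W_m`: `x^δ f_α ≺_m x^{δ'} f_{α'}` iff `δ <_{drl} δ'`, or
`δ = δ'` and `Ht(f_α) < Ht(f_{α'})` for a fixed term order `lt`. -/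
def PairLT {n : ℕ} (lt : E n → E n → Prop) (p q : E n × E n) : Prop :=
  drlLT p.1 q.1 ∨ (p.1 = q.1 ∧ lt p.2 q.2)

/-- `⪰_m`:  greater or equal for the order on `W_m`. -/
def PairGE {n : ℕ} (lt : E n → E n → Prop) (p q : E n × E n) : Prop :=
  PairLT lt q p ∨ p = q

/-- For every element `g_β = x^δ f_α` of `V_m`: either `δ = 0` or
`max(x^δ) ≤ min(x^α)`; in particular, when `δ ≠ 0`, `min(x^δ) = min(x^{δ+α})`. -/
theorem stmt14 {n : ℕ} (M : Set (E n)) (hup : UpClosed M)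
    (hss : StronglyStable M) (B : Finset (E n)) (hB : IsMinBasis M B)
    (δ α : E n) (hV : IsV B δ α) :
    δ = 0 ∨
      ((∀ j ∈ δ.support, ∀ k ∈ α.support, j ≤ k) ∧
        ∀ i ∈ δ.support, (∀ j ∈ δ.support, i ≤ j) →
          ∀ j ∈ (δ + α).support, i ≤ j) := by
  induction hV with
  | base α hα => exact Or.inl rfl
  | step δ α i h hmin ih =>
    right
    have key : ∀ j ∈ (δ + Finsupp.single i 1).support, ∀ k ∈ α.support, j ≤ k := by
      intro j hj k hk
      rw [Finsupp.mem_support_iff, Finsupp.add_apply] at hj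
      have hk0 : α k ≠ 0 := Finsupp.mem_support_iff.mp hk
      have hk' : k ∈ (δ + α + Finsupp.single i 1).support := by
        rw [Finsupp.mem_support_iff]
        simp only [Finsupp.add_apply]
        omega
      by_cases hji : δ j = 0
      · have hj' : j = i := by
          by_contra hne
          rw [Finsupp.single_apply, if_neg (Ne.symm hne)] at hj
          omega
        subst hj'
        exact hmin k hk'
      · rcases ih with h0 | ⟨h1, _⟩
        · exact absurd (by rw [h0]; rfl) hji
        · exact h1 j (Finsupp.mem_support_iff.mpr hji) k hk
    refine ⟨key, ?_⟩
    intro i' hi' hmin' j hj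
    rw [Finsupp.mem_support_iff, Finsupp.add_apply] at hj
    by_cases hα : α j = 0
    · exact hmin' j (Finsupp.mem_support_iff.mpr (by omega))
    · exact key i' hi' j (Finsupp.mem_support_iff.mpr hα)
end

section
/- In K[x,y,z] with x > y > z, let J = (x³, x²y, xy², y⁵)_{≥4} (the truncation in degrees ≥ 4 of the strongly stable ideal) and let G be the J-marked set consisting of the monomials of B_J except xy²z, together with f = xy²z − y⁴ − x²z² with head term xy²z. Then G is not a Gröbner basis of (G) with respect to any term order: there is no term order ≺ with xy²z ≻ y⁴ and xy²z ≻ x²z², since (xy²z)² = x²z² · y⁴. -/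
open MvPolynomial

variable (K : Type*) [Field K]

/-- In `K[x,y,z]`, the marked polynomial `f = xy²z − y⁴ − x²z²` with head term `xy²z`
cannot have its head term as leading term for any term order, since
`(xy²z)² = (x²z²)·(y⁴)`: there is no term order `≺` with `xy²z ≻ y⁴` and `xy²z ≻ x²z²`.
Hence the marked set of Example 3.10 is not a Gröbner basis for any term order. -/
theorem stmt18 :
    -- the key monomial identity (xy²z)² = (x²z²)·(y⁴), written on exponents
    ((Finsupp.single 0 1 + Finsupp.single 1 2 + Finsupp.single 2 1 : E 2) +
      (Finsupp.single 0 1 + Finsupp.single 1 2 + Finsupp.single 2 1) =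
      (Finsupp.single 0 2 + Finsupp.single 2 2) + (Finsupp.single 1 4 : E 2)) ∧
    -- no term order puts xy²z above both y⁴ and x²z²
    ∀ lt : E 2 → E 2 → Prop,
      (∀ a b : E 2, lt a b ∨ a = b ∨ lt b a) →
      Transitive lt → Irreflexive lt →
      (∀ a b c : E 2, lt a b → lt (a + c) (b + c)) →
      (∀ a : E 2, a ≠ 0 → lt 0 a) →
      ¬ (lt (Finsupp.single 1 4)
            (Finsupp.single 0 1 + Finsupp.single 1 2 + Finsupp.single 2 1) ∧
         lt (Finsupp.single 0 2 + Finsupp.single 2 2)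
            (Finsupp.single 0 1 + Finsupp.single 1 2 + Finsupp.single 2 1)) := by

  have hkey : ((Finsupp.single 0 1 + Finsupp.single 1 2 + Finsupp.single 2 1 : E 2) +
      (Finsupp.single 0 1 + Finsupp.single 1 2 + Finsupp.single 2 1) =
      (Finsupp.single 0 2 + Finsupp.single 2 2) + (Finsupp.single 1 4 : E 2)) := by
    ext i
    fin_cases i <;> simp [Finsupp.single_apply]
  refine ⟨hkey, ?_⟩
  intro lt _htot htrans hirr hadd _hpos ⟨h1, h2⟩
  set h : E 2 := Finsupp.single 0 1 + Finsupp.single 1 2 + Finsupp.single 2 1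
  have a1 : lt (Finsupp.single 0 2 + Finsupp.single 2 2 + Finsupp.single 1 4) (h + Finsupp.single 1 4) :=
    hadd _ _ _ h2
  have a2 : lt (h + Finsupp.single 1 4) (h + h) := by
    have := hadd _ _ h h1
    simpa [add_comm] using this
  have a3 : lt (Finsupp.single 0 2 + Finsupp.single 2 2 + Finsupp.single 1 4) (h + h) :=
    htrans a1 a2
  rw [hkey] at a3
  exact hirr _ a3
end
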